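/- arXiv:2105.13081 — 3 statements merged into one kernel-verified Lean document; each statement's English description precedes it below -/
import Mathlib

section
/- Let φ>0, r∈(0,1), z₂>0 and k∈ℕ. Then the k-th conditional moment of the Kibble bivariate gamma distribution is given by a generalized Laguerre polynomial: ∫₀^∞ z₁^k · g_{φ,r}(z₁,z₂) dz₁ = [φ^φ z₂^{φ−1} e^{−φz₂}/Γ(φ)] · k! · ((1−r)/φ)^k · L_k^{φ−1}(−z₂ φ r/(1−r)). Equivalently, for the GAR(1) process with r=ρ^j, E(Z_{t+j}^k | Z_t = z) = k! ((1−ρ^j)/φ)^k L_k^{φ−1}(−z φρ^j/(1−ρ^j)). -/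
open MeasureTheory Real Set

/-- Modified Bessel function of the first kind (series form). -/
noncomputable def besselI (α x : ℝ) : ℝ :=
  ∑' k : ℕ, (x / 2) ^ (2 * (k : ℝ) + α) / (Real.Gamma ((k : ℝ) + α + 1) * (Nat.factorial k : ℝ))

/-- Gamma density with rate `γ` and shape `α`. -/
noncomputable def gammaPdf (γ α z : ℝ) : ℝ :=
  γ ^ α * z ^ (α - 1) * Real.exp (-γ * z) / Real.Gamma α

/-- Kibble bivariate gamma density with parameters `φ > 0` and `r ∈ (0,1)`. -/
noncomputable def kibble (φ r z₁ z₂ : ℝ) : ℝ :=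
  φ ^ (φ + 1) / ((1 - r) * Real.Gamma φ) * (z₁ * z₂ / r) ^ ((φ - 1) / 2) *
    Real.exp (-φ * (z₁ + z₂) / (1 - r)) *
    besselI (φ - 1) (2 * φ * Real.sqrt (r * z₁ * z₂) / (1 - r))

/-- Conditional normal density of the NSVt model given latent `z`: `N(μ, σ²/z)`. -/
noncomputable def normCond (σ μ y z : ℝ) : ℝ :=
  Real.sqrt z / (Real.sqrt (2 * Real.pi) * σ) * Real.exp (-z * (y - μ) ^ 2 / (2 * σ ^ 2))

/-- Student-t density with `ν` degrees of freedom, location `μ` and scale `σ`. -/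
noncomputable def studentTPdf (ν μ σ y : ℝ) : ℝ :=
  Real.Gamma ((ν + 1) / 2) / (Real.Gamma (ν / 2) * Real.sqrt (Real.pi * ν) * σ) *
    (1 + (y - μ) ^ 2 / (ν * σ ^ 2)) ^ (-(ν + 1) / 2)

/-- Gauss hypergeometric series `₂F₁(a₁,a₂;b;x)`. -/
noncomputable def hyp2F1 (a₁ a₂ b x : ℝ) : ℝ :=
  ∑' k : ℕ, Real.Gamma ((k : ℝ) + a₁) * Real.Gamma ((k : ℝ) + a₂) * Real.Gamma b /
    (Real.Gamma a₁ * Real.Gamma a₂ * Real.Gamma ((k : ℝ) + b)) * x ^ k / (Nat.factorial k : ℝ)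

/-- Confluent hypergeometric (Kummer) series `₁F₁(a;b;x)`. -/
noncomputable def hyp1F1 (a b x : ℝ) : ℝ :=
  ∑' k : ℕ, Real.Gamma ((k : ℝ) + a) * Real.Gamma b /
    (Real.Gamma a * Real.Gamma ((k : ℝ) + b)) * x ^ k / (Nat.factorial k : ℝ)

/-- Generalized Laguerre polynomial of degree `n` with parameter `α`. -/
noncomputable def laguerreL (n : ℕ) (α x : ℝ) : ℝ :=
  ∑ i ∈ Finset.range (n + 1),
    (-1 : ℝ) ^ i * Real.Gamma ((n : ℝ) + α + 1) /
      (Real.Gamma (α + (i : ℝ) + 1) * (Nat.factorial (n - i) : ℝ) * (Nat.factorial i : ℝ)) * x ^ i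

/-- Negative binomial pmf with parameters `φ > 0` and `r ∈ (0,1)`. -/
noncomputable def nbinomPmf (φ r : ℝ) (u : ℕ) : ℝ :=
  Real.Gamma (φ + u) / (Real.Gamma φ * (Nat.factorial u : ℝ)) * (1 - r) ^ φ * r ^ u

/-- The quantity `ω(y₁,y₂)` appearing in the pairwise joint density of the NSVt model. -/
noncomputable def omegaFn (ν σ r μ₁ μ₂ y₁ y₂ : ℝ) : ℝ :=
  ((1 + (1 - r) * (y₁ - μ₁) ^ 2 / (ν * σ ^ 2)) *
    (1 + (1 - r) * (y₂ - μ₂) ^ 2 / (ν * σ ^ 2)))⁻¹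

/-- Pairwise joint density of the NSVt model (with `r = ρʲ`). -/
noncomputable def pairDensity (ν σ r μ₁ μ₂ y₁ y₂ : ℝ) : ℝ :=
  (1 - r) ^ (ν / 2 + 1) / (Real.pi * ν * σ ^ 2) *
    (Real.Gamma ((ν + 1) / 2) / Real.Gamma (ν / 2)) ^ 2 *
    omegaFn ν σ r μ₁ μ₂ y₁ y₂ ^ ((ν + 1) / 2) *
    hyp2F1 ((ν + 1) / 2) ((ν + 1) / 2) (ν / 2) (r * omegaFn ν σ r μ₁ μ₂ y₁ y₂)

/-!
Given `z₂`, the Kibble density is a Poisson mixture of gamma densities: expanding the Bessel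
series gives `g(z₁, z₂) = γ_{φ,φ}(z₂) ∑ₙ e⁻ᵗ tⁿ / n! · γ_{c,φ+n}(z₁)` with `c = φ / (1 - r)` and
`t = φ r z₂ / (1 - r)`, where `γ_{c,a}` is the gamma density of rate `c` and shape `a`. The `k`-th
moment of `γ_{c,φ+n}` is `Γ(φ+n+k) / (Γ(φ+n) cᵏ)`. By Chu–Vandermonde,
`Γ(φ+n+k) / Γ(φ+n) = ∑ᵢ C(k,i) n^(i) Γ(φ+k) / Γ(φ+i)` with falling factorials `n^(i)`, whose
Poisson means are `tⁱ`, and the resulting sum `∑ᵢ C(k,i) Γ(φ+k) / Γ(φ+i) tⁱ` is `k! L_k^{φ-1}(-t)`.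
-/

open Finset Polynomial

namespace Real

theorem Gamma_add_nat_div_Gamma_eq {x : ℝ} (hx : 0 < x) (n : ℕ) :
    Gamma (x + n) / Gamma x = (ascPochhammer ℝ n).eval x := by
  rw [div_eq_iff (Gamma_pos_of_pos hx).ne']
  induction n with
  | zero => simp
  | succ n ih =>
    rw [Nat.cast_succ, ← add_assoc, Gamma_add_one (by positivity), ih, ascPochhammer_succ_eval]
    ring

theorem Gamma_add_nat_add_div_Gamma_add_nat {x : ℝ} (hx : 0 < x) (k n : ℕ) :
    Gamma (x + n + k) / Gamma (x + n) =
      ∑ i ∈ range (k + 1), k.choose i * n.descFactorial i * (Gamma (x + k) / Gamma (x + i)) := by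
  -- The rising factorial of `x + n` is the falling factorial of `n + (x + k - 1)`,
  -- which Chu–Vandermonde splits into falling factorials of `n` and of `x + k - 1`.
  rw [Gamma_add_nat_div_Gamma_eq (by positivity), ← ascPochhammer_smeval_eq_eval,
    show x + n = (n + (x + k - 1)) - k + 1 by ring, ← descPochhammer_smeval_eq_ascPochhammer,
    Ring.descPochhammer_smeval_add _ (Commute.all _ _), Nat.sum_antidiagonal_eq_sum_range_succ_mk]
  refine sum_congr rfl fun i hi => ?_
  have hik : i ≤ k := Nat.lt_succ_iff.mp (mem_range.mp hi)
  have harg : x + k - 1 - ((k - i : ℕ) : ℝ) + 1 = x + i := by rw [Nat.cast_sub hik]; ring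
  rw [descPochhammer_smeval_eq_descFactorial, descPochhammer_smeval_eq_ascPochhammer, harg,
    ascPochhammer_smeval_eq_eval, ← Gamma_add_nat_div_Gamma_eq (by positivity),
    Nat.cast_sub hik, add_add_sub_cancel, mul_assoc]

end Real

theorem hasSum_poisson_mul_descFactorial (t : ℝ) (i : ℕ) :
    HasSum (fun n : ℕ => exp (-t) * t ^ n / n.factorial * n.descFactorial i) (t ^ i) := by
  rw [← hasSum_nat_add_iff' i]
  have hlow : ∑ n ∈ range i, exp (-t) * t ^ n / n.factorial * n.descFactorial i = 0 :=
    sum_eq_zero fun n hn => by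
      rw [Nat.descFactorial_eq_zero_iff_lt.mpr (mem_range.mp hn), Nat.cast_zero, mul_zero]
  have hexp := (NormedSpace.expSeries_div_hasSum_exp t).mul_left (t ^ i * exp (-t))
  rw [← exp_eq_exp_ℝ, mul_assoc, ← exp_add, neg_add_cancel, exp_zero, mul_one] at hexp
  rw [hlow, sub_zero]
  refine hexp.congr_fun fun n => ?_
  have hfac : ((n + i).factorial : ℝ) = n.factorial * (n + i).descFactorial i := by
    exact_mod_cast (Nat.add_sub_cancel n i ▸
      Nat.factorial_mul_descFactorial (Nat.le_add_left i n)).symm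
  rw [hfac, pow_add]
  field_simp

theorem factorial_mul_laguerreL_sub_one_neg (k : ℕ) (a t : ℝ) :
    k.factorial * laguerreL k (a - 1) (-t) =
      ∑ i ∈ range (k + 1), k.choose i * (Gamma (a + k) / Gamma (a + i)) * t ^ i := by
  rw [laguerreL, mul_sum]
  refine sum_congr rfl fun i hi => ?_
  rw [show (k : ℝ) + (a - 1) + 1 = a + k by ring, show a - 1 + i + 1 = a + i by ring]
  have hik : i ≤ k := Nat.lt_succ_iff.mp (mem_range.mp hi)
  have hsign : (-1 : ℝ) ^ i * (-t) ^ i = t ^ i := by rw [← mul_pow]; simp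
  rw [Nat.cast_choose ℝ hik, ← hsign]
  field_simp

theorem hasSum_poisson_mul_Gamma_add_div_Gamma {a : ℝ} (ha : 0 < a) (k : ℕ) (t : ℝ) :
    HasSum (fun n : ℕ => exp (-t) * t ^ n / n.factorial * (Gamma (a + n + k) / Gamma (a + n)))
      (k.factorial * laguerreL k (a - 1) (-t)) := by
  simp_rw [Gamma_add_nat_add_div_Gamma_add_nat ha, factorial_mul_laguerreL_sub_one_neg, mul_sum]
  refine hasSum_sum fun i _ => ?_
  refine ((hasSum_poisson_mul_descFactorial t i).mul_left
    (k.choose i * (Gamma (a + k) / Gamma (a + i)))).congr_fun fun n => ?_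
  ring

theorem MeasureTheory.integral_tsum_of_nonneg_of_hasSum {α : Type*} [MeasurableSpace α]
    {μ : Measure α} {f : ℕ → α → ℝ} {a : ℝ} (hf : ∀ n, Integrable (f n) μ)
    (hf_nonneg : ∀ n, 0 ≤ᵐ[μ] f n) (ha : HasSum (fun n => ∫ x, f n x ∂μ) a) :
    ∫ x, ∑' n, f n x ∂μ = a := by
  have hnorm : ∀ n, ∫ x, ‖f n x‖ ∂μ = ∫ x, f n x ∂μ := fun n =>
    integral_congr_ae ((hf_nonneg n).mono fun x hx => Real.norm_of_nonneg hx)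
  rw [← integral_tsum_of_summable_integral_norm hf (by simpa only [hnorm] using ha.summable),
    ha.tsum_eq]

theorem gammaPdf_nonneg {γ α z : ℝ} (hγ : 0 ≤ γ) (hα : 0 < α) (hz : 0 ≤ z) :
    0 ≤ gammaPdf γ α z := by
  have := Gamma_pos_of_pos hα
  unfold gammaPdf
  positivity

theorem rpow_mul_gammaPdf {γ α z : ℝ} (hz : 0 < z) (s : ℝ) :
    z ^ s * gammaPdf γ α z = γ ^ α / Gamma α * (z ^ (α + s - 1) * exp (-(γ * z))) := by
  rw [gammaPdf, show α + s - 1 = s + (α - 1) by ring, rpow_add hz, neg_mul]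
  ring

theorem integrableOn_rpow_mul_gammaPdf {γ α s : ℝ} (hγ : 0 < γ) (hαs : 0 < α + s) :
    IntegrableOn (fun z => z ^ s * gammaPdf γ α z) (Ioi 0) := by
  have h := integrableOn_rpow_mul_exp_neg_mul_rpow (s := α + s - 1) (p := 1) (by linarith)
    one_pos hγ
  refine IntegrableOn.congr_fun (h.const_mul (γ ^ α / Gamma α)) (fun z hz => ?_) measurableSet_Ioi
  rw [rpow_mul_gammaPdf hz, rpow_one, neg_mul]

theorem integral_rpow_mul_gammaPdf {γ α s : ℝ} (hγ : 0 < γ) (hαs : 0 < α + s) :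
    ∫ z in Ioi 0, z ^ s * gammaPdf γ α z = Gamma (α + s) / (Gamma α * γ ^ s) := by
  rw [setIntegral_congr_fun measurableSet_Ioi fun z hz => rpow_mul_gammaPdf hz s,
    integral_const_mul, integral_rpow_mul_exp_neg_mul_Ioi (by positivity) hγ, one_div,
    inv_rpow hγ.le, rpow_add hγ]
  field_simp

theorem besselI_two_mul (α : ℝ) {w : ℝ} (hw : 0 < w) :
    besselI α (2 * w) =
      w ^ α * ∑' n : ℕ, (w ^ 2) ^ n / (Gamma (n + α + 1) * n.factorial) := by
  rw [besselI, ← tsum_mul_left]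
  refine tsum_congr fun n => ?_
  rw [mul_div_cancel_left₀ _ two_ne_zero, rpow_add hw,
    show 2 * (n : ℝ) = ((2 * n : ℕ) : ℝ) by push_cast; ring, rpow_natCast, pow_mul]
  ring

theorem div_rpow_half_eq {a r : ℝ} (ha : 0 < a) (hr : 0 < r) (p : ℝ) :
    (a / r) ^ (p / 2) = a ^ p / √(r * a) ^ p := by
  rw [eq_div_iff (by positivity), sqrt_eq_rpow, ← rpow_mul (by positivity), one_div_mul_eq_div,
    ← mul_rpow (by positivity) (by positivity), show a / r * (r * a) = a ^ 2 by field_simp,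
    ← rpow_natCast, ← rpow_mul ha.le]
  ring_nf

theorem kibble_eq_gammaPdf_mul_tsum {φ r z₁ z₂ : ℝ} (hφ : 0 < φ) (hr : r ∈ Set.Ioo 0 1)
    (hz₁ : 0 < z₁) (hz₂ : 0 < z₂) :
    kibble φ r z₁ z₂ = gammaPdf φ φ z₂ * ∑' n : ℕ, exp (-(φ * r * z₂ / (1 - r))) *
      (φ * r * z₂ / (1 - r)) ^ n / n.factorial * gammaPdf (φ / (1 - r)) (φ + n) z₁ := by
  obtain ⟨hr0, hr1⟩ := hr
  have h1r : 0 < 1 - r := sub_pos.mpr hr1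
  set c := φ / (1 - r) with hc
  have hcpos : 0 < c := by positivity
  set t := φ * r * z₂ / (1 - r) with ht
  set s := √(r * z₁ * z₂)
  have hspos : 0 < s := sqrt_pos.mpr (by positivity)
  have hbessel : besselI (φ - 1) (2 * φ * s / (1 - r)) = c ^ (φ - 1) * s ^ (φ - 1) *
      ∑' n : ℕ, (c * t * z₁) ^ n / (Gamma (φ + n) * n.factorial) := by
    have hsq : (c * s) ^ 2 = c * t * z₁ := by
      rw [mul_pow, sq_sqrt (by positivity), ht, hc]
      ring
    rw [show 2 * φ * s / (1 - r) = 2 * (c * s) by rw [hc]; ring,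
      besselI_two_mul _ (by positivity), hsq, mul_rpow hcpos.le hspos.le]
    simp only [show ∀ n : ℕ, (n : ℝ) + (φ - 1) + 1 = φ + n from fun n => by ring]
  have hprefactor : (z₁ * z₂ / r) ^ ((φ - 1) / 2) = z₁ ^ (φ - 1) * z₂ ^ (φ - 1) / s ^ (φ - 1) := by
    rw [div_rpow_half_eq (by positivity) hr0, mul_rpow hz₁.le hz₂.le, ← mul_assoc]
  have hexp : exp (-φ * (z₁ + z₂) / (1 - r)) = exp (-φ * z₂) * exp (-t) * exp (-c * z₁) := by
    rw [← exp_add, ← exp_add, ht, hc]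
    congr 1
    field_simp
    ring
  have hφpow : φ ^ (φ + 1) = φ ^ φ * (c * (1 - r)) := by
    rw [rpow_add_one hφ.ne', hc]
    field_simp
  have hcpow (n : ℕ) : c ^ (φ + n) = c ^ (φ - 1) * c * c ^ n := by
    rw [show φ + n = φ - 1 + 1 + n by ring, rpow_add hcpos, rpow_add_one hcpos.ne', rpow_natCast]
  have hz₁pow (n : ℕ) : z₁ ^ (φ + n - 1) = z₁ ^ (φ - 1) * z₁ ^ n := by
    rw [show φ + n - 1 = φ - 1 + n by ring, rpow_add hz₁, rpow_natCast]
  rw [kibble, hbessel, gammaPdf, ← tsum_mul_left, ← tsum_mul_left, ← tsum_mul_left]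
  refine tsum_congr fun n => ?_
  rw [gammaPdf, hexp, hφpow, hcpow, hz₁pow, hprefactor]
  have : 0 < s ^ (φ - 1) := by positivity
  have : 0 < Gamma φ := Gamma_pos_of_pos hφ
  have : 0 < Gamma (φ + n) := Gamma_pos_of_pos (by positivity)
  field_simp
  ring

theorem integral_pow_mul_tsum_poisson_mul_gammaPdf {a γ t : ℝ} (ha : 0 < a) (hγ : 0 < γ)
    (ht : 0 ≤ t) (k : ℕ) :
    ∫ z in Ioi 0, z ^ k * ∑' n : ℕ, exp (-t) * t ^ n / n.factorial * gammaPdf γ (a + n) z =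
      k.factorial * laguerreL k (a - 1) (-t) / γ ^ k := by
  set f : ℕ → ℝ → ℝ := fun n z =>
    exp (-t) * t ^ n / n.factorial * (z ^ (k : ℝ) * gammaPdf γ (a + n) z)
  have hf_int (n : ℕ) : IntegrableOn (f n) (Ioi 0) :=
    (integrableOn_rpow_mul_gammaPdf hγ (by positivity)).const_mul _
  have hf_nonneg (n : ℕ) : 0 ≤ᵐ[volume.restrict (Ioi 0)] f n :=
    ae_restrict_of_forall_mem measurableSet_Ioi fun z hz =>
      have := gammaPdf_nonneg hγ.le (α := a + n) (by positivity) (le_of_lt hz)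
      have := rpow_nonneg (le_of_lt hz) k
      by positivity
  have hf_sum : HasSum (fun n => ∫ z in Ioi 0, f n z)
      (k.factorial * laguerreL k (a - 1) (-t) / γ ^ (k : ℝ)) := by
    refine ((hasSum_poisson_mul_Gamma_add_div_Gamma ha k t).div_const _).congr_fun fun n => ?_
    rw [integral_const_mul, integral_rpow_mul_gammaPdf hγ (by positivity)]
    ring
  rw [← rpow_natCast, ← integral_tsum_of_nonneg_of_hasSum hf_int hf_nonneg hf_sum]
  refine setIntegral_congr_fun measurableSet_Ioi fun z _ => ?_
  rw [← tsum_mul_left]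
  exact tsum_congr fun n => by simp only [f, rpow_natCast]; ring

/-- conditional moments of the Kibble bivariate gamma / GAR(1) process via
generalized Laguerre polynomials. -/
theorem kibble_cond_moment (φ r z₂ : ℝ) (k : ℕ) (hφ : 0 < φ) (hr : r ∈ Set.Ioo (0 : ℝ) 1)
    (hz : 0 < z₂) :
    (∫ z₁ in Set.Ioi (0 : ℝ), z₁ ^ k * kibble φ r z₁ z₂) =
      (φ ^ φ * z₂ ^ (φ - 1) * Real.exp (-φ * z₂) / Real.Gamma φ) *
        (Nat.factorial k : ℝ) * ((1 - r) / φ) ^ k *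
        laguerreL k (φ - 1) (-(z₂ * φ * r) / (1 - r)) := by
  have h1r : 0 < 1 - r := sub_pos.mpr hr.2
  have ht : 0 ≤ φ * r * z₂ / (1 - r) := div_nonneg (mul_pos (mul_pos hφ hr.1) hz).le h1r.le
  calc ∫ z₁ in Ioi 0, z₁ ^ k * kibble φ r z₁ z₂
      = ∫ z₁ in Ioi 0, gammaPdf φ φ z₂ * (z₁ ^ k * ∑' n : ℕ, exp (-(φ * r * z₂ / (1 - r))) *
          (φ * r * z₂ / (1 - r)) ^ n / n.factorial * gammaPdf (φ / (1 - r)) (φ + n) z₁) :=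
        setIntegral_congr_fun measurableSet_Ioi fun z₁ hz₁ => by
          rw [kibble_eq_gammaPdf_mul_tsum hφ hr hz₁ hz, mul_left_comm]
    _ = gammaPdf φ φ z₂ * (k.factorial * laguerreL k (φ - 1) (-(φ * r * z₂ / (1 - r))) /
          (φ / (1 - r)) ^ k) := by
        rw [integral_const_mul,
          integral_pow_mul_tsum_poisson_mul_gammaPdf hφ (div_pos hφ h1r) ht]
    _ = _ := by
        rw [gammaPdf, show (1 - r) / φ = (φ / (1 - r))⁻¹ from (inv_div _ _).symm, inv_pow,
          show -(z₂ * φ * r) / (1 - r) = -(φ * r * z₂ / (1 - r)) by ring]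
        ring
end

section
/- Let ν>0, σ²>0, r∈(0,1) and μ₁,μ₂∈ℝ. For all y₁,y₂∈ℝ, ∫₀^∞ ∫₀^∞ f(y₁|z₁,μ₁) · f(y₂|z₂,μ₂) · g_{ν/2,r}(z₁,z₂) dz₁ dz₂ = ((1−r)^{ν/2+1}/(πνσ²)) · (Γ((ν+1)/2)/Γ(ν/2))² · ω(y₁,y₂)^{(ν+1)/2} · ₂F₁((ν+1)/2, (ν+1)/2; ν/2; r·ω(y₁,y₂)). That is, the pairwise joint density of (Y_{t+j},Y_t) in the NSVt model with r = ρ^j is given by this explicit hypergeometric expression. -/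
open MeasureTheory Real Set

/-!
Expanding the Bessel series shows that Kibble's density is a negative-binomial mixture, with
weights `nbinomPmf φ r k`, of products of two independent gamma densities of shape `φ + k` and
rate `φ / (1 - r)`. Against a gamma density in `z`, the normal density `N(μ, σ² / z)` integrates
to an explicit Gamma integral, so term by term the double integral is a negative-binomial weight
times two Student-type factors, which recombine into the `k`-th term of `₂F₁` at `r ω`. All terms
are nonnegative and `r ω < 1`, so the series of integrals converges and termwise integration is
legitimate.
-/

namespace MeasureTheory

variable {α β E : Type*} [MeasurableSpace α] [MeasurableSpace β] {μ : Measure α} {ν : Measure β}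
  [NormedAddCommGroup E]

theorem ae_summable_norm_of_summable_integral_norm {ι : Type*} [Countable ι] {F : ι → α → E}
    (hF : ∀ i, Integrable (F i) μ) (hs : Summable fun i ↦ ∫ a, ‖F i a‖ ∂μ) :
    ∀ᵐ a ∂μ, Summable fun i ↦ ‖F i a‖ := by
  refine summable_norm_of_tsum_eLpNorm_ne_top le_rfl (fun i ↦ (hF i).1) ?_
  simp_rw [eLpNorm_one_eq_lintegral_enorm, ← ofReal_integral_norm_eq_lintegral_enorm (hF _),
    ← ENNReal.ofReal_tsum_of_nonneg (fun i ↦ integral_nonneg fun a ↦ norm_nonneg (F i a)) hs]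
  exact ENNReal.ofReal_ne_top

lemma integral_norm_eq_integral_of_nonneg {f : α → ℝ} (hf : 0 ≤ᵐ[μ] f) :
    ∫ a, ‖f a‖ ∂μ = ∫ a, f a ∂μ :=
  integral_congr_ae (hf.mono fun _ ha ↦ Real.norm_of_nonneg ha)

theorem integral_integral_tsum_mul_of_nonneg {g : ℕ → α → ℝ} {h : ℕ → β → ℝ}
    (hg : ∀ k, Integrable (g k) μ) (hh : ∀ k, Integrable (h k) ν)
    (hg₀ : ∀ k, 0 ≤ᵐ[μ] g k) (hh₀ : ∀ k, 0 ≤ᵐ[ν] h k)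
    (hs : Summable fun k ↦ (∫ x, g k x ∂μ) * ∫ y, h k y ∂ν) :
    ∫ y, ∫ x, ∑' k, g k x * h k y ∂μ ∂ν = ∑' k, (∫ x, g k x ∂μ) * ∫ y, h k y ∂ν := by
  have hG₀ k : 0 ≤ ∫ x, g k x ∂μ := integral_nonneg_of_ae (hg₀ k)
  have hF k : Integrable (fun y ↦ (∫ x, g k x ∂μ) * h k y) ν := (hh k).const_mul _
  have hFnorm k : ∫ y, ‖(∫ x, g k x ∂μ) * h k y‖ ∂ν = (∫ x, g k x ∂μ) * ∫ y, h k y ∂ν := by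
    rw [integral_norm_eq_integral_of_nonneg ((hh₀ k).mono fun y hy ↦ mul_nonneg (hG₀ k) hy),
      integral_const_mul]
  have hFs : Summable fun k ↦ ∫ y, ‖(∫ x, g k x ∂μ) * h k y‖ ∂ν := by simpa only [hFnorm] using hs
  have inner : ∀ᵐ y ∂ν, ∫ x, ∑' k, g k x * h k y ∂μ = ∑' k, (∫ x, g k x ∂μ) * h k y := by
    filter_upwards [ae_summable_norm_of_summable_integral_norm hF hFs, ae_all_iff.2 hh₀]
      with y hsum hy₀
    have hnorm k : ∫ x, ‖g k x * h k y‖ ∂μ = ‖(∫ x, g k x ∂μ) * h k y‖ := by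
      rw [integral_norm_eq_integral_of_nonneg ((hg₀ k).mono fun x hx ↦ mul_nonneg hx (hy₀ k)),
        integral_mul_const, Real.norm_of_nonneg (mul_nonneg (hG₀ k) (hy₀ k))]
    rw [← integral_tsum_of_summable_integral_norm (fun k ↦ (hg k).mul_const _)
      (by simpa only [hnorm] using hsum)]
    simp only [integral_mul_const]
  rw [integral_congr_ae inner, ← integral_tsum_of_summable_integral_norm hF hFs]
  simp only [integral_const_mul]

end MeasureTheory

theorem Real.Gamma_natCast_add_div_Gamma {a : ℝ} (ha : 0 < a) (n : ℕ) :
    Real.Gamma (n + a) / Real.Gamma a = (ascPochhammer ℝ n).eval a := by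
  induction n with
  | zero => simp [(Real.Gamma_pos_of_pos ha).ne']
  | succ n ih =>
    rw [ascPochhammer_succ_right, Polynomial.eval_mul, ← ih, Nat.cast_succ,
      add_right_comm, Real.Gamma_add_one (by positivity)]
    simp only [Polynomial.eval_add, Polynomial.eval_X, Polynomial.eval_natCast]
    ring

/-- `hyp2F1 a₁ a₂ b x` is by definition `∑' k, hyp2F1Term a₁ a₂ b x k`. -/
noncomputable def hyp2F1Term (a₁ a₂ b x : ℝ) (k : ℕ) : ℝ :=
  Gamma ((k : ℝ) + a₁) * Gamma ((k : ℝ) + a₂) * Gamma b /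
    (Gamma a₁ * Gamma a₂ * Gamma ((k : ℝ) + b)) * x ^ k / (Nat.factorial k : ℝ)

theorem hyp2F1Term_eq_ordinaryHypergeometricSeries {a₁ a₂ b : ℝ} (ha₁ : 0 < a₁) (ha₂ : 0 < a₂)
    (hb : 0 < b) (x : ℝ) (k : ℕ) :
    hyp2F1Term a₁ a₂ b x k = ordinaryHypergeometricSeries ℝ a₁ a₂ b k fun _ ↦ x := by
  rw [ordinaryHypergeometricSeries_apply_eq, ← Real.Gamma_natCast_add_div_Gamma ha₁,
    ← Real.Gamma_natCast_add_div_Gamma ha₂, ← Real.Gamma_natCast_add_div_Gamma hb, hyp2F1Term,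
    smul_eq_mul]
  have := Gamma_pos_of_pos ha₁
  have := Gamma_pos_of_pos ha₂
  have := Gamma_pos_of_pos hb
  have := Gamma_pos_of_pos (show 0 < (k : ℝ) + b by positivity)
  field_simp

theorem hasSum_hyp2F1 {a₁ a₂ b x : ℝ} (ha₁ : 0 < a₁) (ha₂ : 0 < a₂) (hb : 0 < b) (hx : |x| < 1) :
    HasSum (hyp2F1Term a₁ a₂ b x) (hyp2F1 a₁ a₂ b x) := by
  have hradius := ordinaryHypergeometricSeries_radius_eq_one ℝ a₁ a₂ b fun n ↦
    have := n.cast_nonneg (α := ℝ)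
    ⟨by linarith, by linarith, by linarith⟩
  have hx' : x ∈ Metric.eball (0 : ℝ) (ordinaryHypergeometricSeries ℝ a₁ a₂ b).radius := by
    rwa [hradius, Metric.mem_eball, edist_zero_right, ← ofReal_norm, ENNReal.ofReal_lt_one]
  have hsum : Summable (hyp2F1Term a₁ a₂ b x) :=
    (FormalMultilinearSeries.summable _ hx').congr fun k ↦
      (hyp2F1Term_eq_ordinaryHypergeometricSeries ha₁ ha₂ hb x k).symm
  exact hsum.hasSum

section NSVt

variable {σ μ y γ α : ℝ}

lemma normCond_mul_gammaPdf {z : ℝ} (hz : 0 < z) :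
    normCond σ μ y z * gammaPdf γ α z = γ ^ α / (Gamma α * √(2 * π) * σ) *
      (z ^ (α + 1 / 2 - 1) * exp (-((γ + (y - μ) ^ 2 / (2 * σ ^ 2)) * z))) := by
  rw [normCond, gammaPdf, sqrt_eq_rpow, show α + 1 / 2 - 1 = 1 / 2 + (α - 1) by ring,
    rpow_add hz, show -((γ + (y - μ) ^ 2 / (2 * σ ^ 2)) * z) =
      -z * (y - μ) ^ 2 / (2 * σ ^ 2) + -γ * z by ring, exp_add]
  ring

lemma normCond_mul_gammaPdf_nonneg (hσ : 0 ≤ σ) (hγ : 0 ≤ γ) (hα : 0 < α) {z : ℝ} (hz : 0 < z) :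
    0 ≤ normCond σ μ y z * gammaPdf γ α z := by
  have := Gamma_pos_of_pos hα
  unfold normCond gammaPdf
  positivity

lemma integrableOn_normCond_mul_gammaPdf (hγ : 0 < γ) (hα : 0 < α) :
    IntegrableOn (fun z ↦ normCond σ μ y z * gammaPdf γ α z) (Ioi 0) := by
  have hc : 0 < γ + (y - μ) ^ 2 / (2 * σ ^ 2) := by positivity
  have hint : IntegrableOn (fun z ↦ γ ^ α / (Gamma α * √(2 * π) * σ) *
      (z ^ (α + 1 / 2 - 1) * exp (-(γ + (y - μ) ^ 2 / (2 * σ ^ 2)) * z ^ (1 : ℝ)))) (Ioi 0) :=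
    Integrable.const_mul (integrableOn_rpow_mul_exp_neg_mul_rpow (by linarith) one_pos hc) _
  refine hint.congr_fun (fun z hz ↦ ?_) measurableSet_Ioi
  simp only [normCond_mul_gammaPdf hz, rpow_one, neg_mul]

theorem integral_normCond_mul_gammaPdf (hγ : 0 < γ) (hα : 0 < α) :
    ∫ z in Ioi 0, normCond σ μ y z * gammaPdf γ α z = γ ^ α * Gamma (α + 1 / 2) /
      (Gamma α * √(2 * π) * σ * (γ + (y - μ) ^ 2 / (2 * σ ^ 2)) ^ (α + 1 / 2)) := by
  have hc : 0 < γ + (y - μ) ^ 2 / (2 * σ ^ 2) := by positivity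
  rw [setIntegral_congr_fun measurableSet_Ioi fun z hz ↦ normCond_mul_gammaPdf hz,
    integral_const_mul, integral_rpow_mul_exp_neg_mul_Ioi (by linarith) hc, one_div,
    inv_rpow hc.le]
  ring

end NSVt

section Kibble

variable {φ r : ℝ}

lemma nbinomPmf_nonneg (hφ : 0 < φ) (hr : r ∈ Ioo 0 1) (k : ℕ) : 0 ≤ nbinomPmf φ r k := by
  obtain ⟨hr₀, hr₁⟩ := hr
  have := sub_pos.2 hr₁
  have := Gamma_pos_of_pos hφ
  have := Gamma_pos_of_pos (show 0 < φ + k by positivity)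
  unfold nbinomPmf
  positivity

theorem kibble_eq_tsum_nbinomPmf_mul_gammaPdf (hφ : 0 < φ) (hr : r ∈ Ioo 0 1) {z₁ z₂ : ℝ}
    (hz₁ : 0 < z₁) (hz₂ : 0 < z₂) :
    kibble φ r z₁ z₂ = ∑' k : ℕ, nbinomPmf φ r k *
      (gammaPdf (φ / (1 - r)) (φ + k) z₁ * gammaPdf (φ / (1 - r)) (φ + k) z₂) := by
  obtain ⟨hr₀, hr₁⟩ := hr
  have h1r : 0 < 1 - r := by linarith
  unfold kibble besselI
  rw [← tsum_mul_left]
  refine tsum_congr fun k ↦ ?_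
  have := Gamma_pos_of_pos hφ
  have := Gamma_pos_of_pos (show 0 < (k : ℝ) + φ by positivity)
  rw [show (k : ℝ) + (φ - 1) + 1 = k + φ by ring, add_comm φ, nbinomPmf, gammaPdf, gammaPdf,
    show 2 * φ * √(r * z₁ * z₂) / (1 - r) / 2 = φ / (1 - r) * √(r * z₁ * z₂) by ring]
  refine log_injOn_pos (mem_Ioi.2 (by positivity)) (mem_Ioi.2 (by positivity)) ?_
  simp (disch := positivity) only [log_mul, log_div, log_exp, log_pow, log_rpow, log_sqrt]
  ring_nf

end Kibble

section PairDensity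

variable {ν σ r μ₁ μ₂ y₁ y₂ : ℝ}

lemma omegaFn_eq (hν : 0 < ν) (hσ : 0 < σ) (hr : r < 1) :
    omegaFn ν σ r μ₁ μ₂ y₁ y₂ = (ν / 2 / (1 - r)) ^ 2 /
      ((ν / 2 / (1 - r) + (y₁ - μ₁) ^ 2 / (2 * σ ^ 2)) *
        (ν / 2 / (1 - r) + (y₂ - μ₂) ^ 2 / (2 * σ ^ 2))) := by
  have := sub_pos.2 hr
  unfold omegaFn
  field_simp

lemma omegaFn_pos (hν : 0 < ν) (hσ : 0 < σ) (hr : r < 1) : 0 < omegaFn ν σ r μ₁ μ₂ y₁ y₂ := by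
  have := sub_pos.2 hr
  unfold omegaFn
  positivity

lemma omegaFn_le_one (hν : 0 ≤ ν) (hr : r ≤ 1) : omegaFn ν σ r μ₁ μ₂ y₁ y₂ ≤ 1 := by
  have h1r := sub_nonneg.2 hr
  refine inv_le_one_of_one_le₀ (one_le_mul_of_one_le_of_one_le ?_ ?_) <;>
    exact le_add_of_nonneg_right (by positivity)

lemma nbinomPmf_mul_integral_mul_integral (hν : 0 < ν) (hσ : 0 < σ) (hr : r ∈ Ioo 0 1) (k : ℕ) :
    nbinomPmf (ν / 2) r k *
        (∫ z in Ioi 0, normCond σ μ₁ y₁ z * gammaPdf (ν / 2 / (1 - r)) (ν / 2 + k) z) *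
        ∫ z in Ioi 0, normCond σ μ₂ y₂ z * gammaPdf (ν / 2 / (1 - r)) (ν / 2 + k) z =
      (1 - r) ^ (ν / 2 + 1) / (π * ν * σ ^ 2) * (Gamma ((ν + 1) / 2) / Gamma (ν / 2)) ^ 2 *
        omegaFn ν σ r μ₁ μ₂ y₁ y₂ ^ ((ν + 1) / 2) *
        hyp2F1Term ((ν + 1) / 2) ((ν + 1) / 2) (ν / 2) (r * omegaFn ν σ r μ₁ μ₂ y₁ y₂) k := by
  obtain ⟨hr₀, hr₁⟩ := hr
  have h1r : 0 < 1 - r := by linarith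
  have hφk : 0 < ν / 2 + k := by positivity
  rw [integral_normCond_mul_gammaPdf (by positivity) hφk,
    integral_normCond_mul_gammaPdf (by positivity) hφk, omegaFn_eq hν hσ hr₁, nbinomPmf,
    hyp2F1Term, show (k : ℝ) + (ν + 1) / 2 = ν / 2 + k + 1 / 2 by ring,
    show (ν + 1) / 2 = ν / 2 + 1 / 2 by ring, add_comm (k : ℝ) (ν / 2)]
  have := Gamma_pos_of_pos (show 0 < ν / 2 by positivity)
  have := Gamma_pos_of_pos hφk
  refine log_injOn_pos (mem_Ioi.2 (by positivity)) (mem_Ioi.2 (by positivity)) ?_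
  simp (disch := positivity) only [log_mul, log_div, log_pow, log_rpow, log_sqrt]
  ring_nf

end PairDensity

/-- explicit hypergeometric form of the pairwise joint density of the NSVt
model. -/
theorem pairwise_joint_density (ν σ r μ₁ μ₂ : ℝ) (hν : 0 < ν) (hσ : 0 < σ)
    (hr : r ∈ Set.Ioo (0 : ℝ) 1) (y₁ y₂ : ℝ) :
    (∫ z₂ in Set.Ioi (0 : ℝ), ∫ z₁ in Set.Ioi (0 : ℝ),
        normCond σ μ₁ y₁ z₁ * normCond σ μ₂ y₂ z₂ * kibble (ν / 2) r z₁ z₂)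
      = pairDensity ν σ r μ₁ μ₂ y₁ y₂ := by
  have hφ : 0 < ν / 2 := half_pos hν
  have hγ : 0 < ν / 2 / (1 - r) := div_pos hφ (sub_pos.2 hr.2)
  set g : ℕ → ℝ → ℝ := fun k z ↦
    nbinomPmf (ν / 2) r k * (normCond σ μ₁ y₁ z * gammaPdf (ν / 2 / (1 - r)) (ν / 2 + k) z)
  set h : ℕ → ℝ → ℝ := fun k z ↦ normCond σ μ₂ y₂ z * gammaPdf (ν / 2 / (1 - r)) (ν / 2 + k) z
  have expand : ∀ z₂ ∈ Ioi (0 : ℝ),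
      ∫ z₁ in Ioi 0, normCond σ μ₁ y₁ z₁ * normCond σ μ₂ y₂ z₂ * kibble (ν / 2) r z₁ z₂ =
        ∫ z₁ in Ioi 0, ∑' k, g k z₁ * h k z₂ := fun z₂ hz₂ ↦
    setIntegral_congr_fun measurableSet_Ioi fun z₁ hz₁ ↦ by
      rw [kibble_eq_tsum_nbinomPmf_mul_gammaPdf hφ hr hz₁ hz₂, ← tsum_mul_left]
      exact tsum_congr fun k ↦ by ring
  have hsum : HasSum (fun k ↦ (∫ z in Ioi 0, g k z) * ∫ z in Ioi 0, h k z)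
      (pairDensity ν σ r μ₁ μ₂ y₁ y₂) := by
    have hrω : |r * omegaFn ν σ r μ₁ μ₂ y₁ y₂| < 1 := by
      rw [abs_of_pos (mul_pos hr.1 (omegaFn_pos hν hσ hr.2))]
      exact mul_lt_one_of_nonneg_of_lt_one_left hr.1.le hr.2 (omegaFn_le_one hν.le hr.2.le)
    simp only [g, h, integral_const_mul, nbinomPmf_mul_integral_mul_integral hν hσ hr]
    exact (hasSum_hyp2F1 (by positivity) (by positivity) hφ hrω).mul_left _
  rw [setIntegral_congr_fun measurableSet_Ioi expand, ← hsum.tsum_eq]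
  refine integral_integral_tsum_mul_of_nonneg (fun k ↦ ?_) (fun k ↦ ?_) (fun k ↦ ?_) (fun k ↦ ?_)
    hsum.summable
  · exact (integrableOn_normCond_mul_gammaPdf hγ (by positivity)).const_mul _
  · exact integrableOn_normCond_mul_gammaPdf hγ (by positivity)
  · exact (ae_restrict_mem measurableSet_Ioi).mono fun z hz ↦ mul_nonneg
      (nbinomPmf_nonneg hφ hr k) (normCond_mul_gammaPdf_nonneg hσ.le hγ.le (by positivity) hz)
  · exact (ae_restrict_mem measurableSet_Ioi).mono fun z hz ↦
      normCond_mul_gammaPdf_nonneg hσ.le hγ.le (by positivity) hz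
end

section
/- (Conditional inverse moment of the GAR(1) process.) Let ν>2, r∈(0,1) and z>0. Then ∫₀^∞ (z')^{−1} · g_{ν/2,r}(z', z) dz' = [(ν/2)^{ν/2} z^{ν/2−1} e^{−(ν/2)z}/Γ(ν/2)] · (ν/(2(1−r))) · exp(−ν z r/(2(1−r))) · ∑_{k=0}^∞ (ν z r/(2(1−r)))^k / (k!·(ν/2 + k − 1)). That is, for the GAR(1) process with φ=ν/2 and r=ρ^j, E(Z_{t+j}^{−1} | Z_t = z) = (ν/(2(1−ρ^j))) exp(−ν z ρ^j/(2(1−ρ^j))) ∑_{k=0}^∞ (ν z ρ^j/(2(1−ρ^j)))^k / (k!(ν/2+k−1)). -/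
open MeasureTheory Real Set

/-!
Expanding the Bessel function, `z₁ ↦ kibble φ r z₁ z₂` is a series of gamma kernels
`z₁ ^ (k + φ - 1) * exp (-(φ / (1 - r) * z₁))` with nonnegative coefficients. Dividing by `z₁`
lowers every shape by one, which keeps it positive because `φ = ν / 2 > 1`; integrating term by
term and using `Γ(k + φ) = (φ + k - 1) Γ(k + φ - 1)` leaves a series dominated by the exponential
series.
-/

theorem besselI_two_mul_sqrt (α : ℝ) {u : ℝ} (hu : 0 ≤ u) :
    besselI α (2 * √u) = ∑' k : ℕ, u ^ ((k : ℝ) + α / 2) / (Gamma (k + α + 1) * k.factorial) := by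
  refine tsum_congr fun k => ?_
  rw [mul_div_cancel_left₀ _ two_ne_zero, sqrt_eq_rpow, ← rpow_mul hu]
  ring_nf

theorem summable_pow_div_factorial_mul {x a : ℝ} {b : ℕ → ℝ} (ha : 0 < a) (hb : ∀ k, a ≤ b k) :
    Summable fun k : ℕ => x ^ k / (k.factorial * b k) := by
  refine .of_norm_bounded ((summable_pow_div_factorial |x|).div_const a) fun k => ?_
  have hbk := hb k
  rw [norm_div, norm_mul, norm_pow, norm_of_nonneg (by positivity : (0 : ℝ) ≤ k.factorial),
    norm_of_nonneg (ha.le.trans hbk), Real.norm_eq_abs, div_div]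
  gcongr

theorem integral_tsum_rpow_mul_exp_neg_mul_Ioi {a s : ℕ → ℝ} {c : ℝ} (hc : 0 < c)
    (ha : ∀ k, 0 ≤ a k) (hs : ∀ k, 0 < s k)
    (hsum : Summable fun k => a k * ((1 / c) ^ s k * Gamma (s k))) :
    ∫ t in Ioi 0, ∑' k, a k * (t ^ (s k - 1) * exp (-(c * t)))
      = ∑' k, a k * ((1 / c) ^ s k * Gamma (s k)) := by
  have hval (k : ℕ) : ∫ t in Ioi 0, a k * (t ^ (s k - 1) * exp (-(c * t)))
      = a k * ((1 / c) ^ s k * Gamma (s k)) := by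
    rw [integral_const_mul, integral_rpow_mul_exp_neg_mul_Ioi (hs k) hc]
  have hint (k : ℕ) : IntegrableOn (fun t => t ^ (s k - 1) * exp (-(c * t))) (Ioi 0) :=
    .of_integral_ne_zero <| by
      have hsk := hs k
      rw [integral_rpow_mul_exp_neg_mul_Ioi hsk hc]
      positivity
  have hnorm (k : ℕ) : ∫ t in Ioi 0, ‖a k * (t ^ (s k - 1) * exp (-(c * t)))‖
      = ∫ t in Ioi 0, a k * (t ^ (s k - 1) * exp (-(c * t))) :=
    setIntegral_congr_fun measurableSet_Ioi fun t (ht : 0 < t) =>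
      norm_of_nonneg (mul_nonneg (ha k) (by positivity))
  rw [← integral_tsum_of_summable_integral_norm (fun k => (hint k).const_mul (a k))
    (by simpa only [hnorm, hval] using hsum)]
  exact tsum_congr hval

noncomputable def kibbleCoeff (φ r z₂ : ℝ) (k : ℕ) : ℝ :=
  φ ^ (φ + 1) / ((1 - r) * Gamma φ) * exp (-(φ / (1 - r) * z₂)) *
    ((φ / (1 - r)) ^ (2 * (k : ℝ) + φ - 1) * r ^ k * z₂ ^ ((k : ℝ) + φ - 1) /
      (Gamma (k + φ) * k.factorial))

theorem kibbleCoeff_nonneg {φ r z₂ : ℝ} (hφ : 0 < φ) (hr : r ∈ Ioo 0 1) (hz₂ : 0 < z₂) (k : ℕ) :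
    0 ≤ kibbleCoeff φ r z₂ k := by
  obtain ⟨hr₀, hr₁⟩ := hr
  have h1r : 0 < 1 - r := sub_pos.2 hr₁
  unfold kibbleCoeff
  positivity

theorem kibble_eq_tsum {φ r z₁ z₂ : ℝ} (hφ : 0 < φ) (hr : r ∈ Ioo 0 1) (hz₁ : 0 < z₁)
    (hz₂ : 0 < z₂) :
    kibble φ r z₁ z₂
      = ∑' k : ℕ, kibbleCoeff φ r z₂ k * (z₁ ^ ((k : ℝ) + φ - 1) * exp (-(φ / (1 - r) * z₁))) := by
  obtain ⟨hr₀, hr₁⟩ := hr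
  have h1r : 0 < 1 - r := sub_pos.2 hr₁
  have hsqrt : 2 * φ * √(r * z₁ * z₂) / (1 - r) = 2 * √((φ / (1 - r)) ^ 2 * (r * z₁ * z₂)) := by
    rw [sqrt_mul (sq_nonneg _), sqrt_sq (by positivity)]
    ring
  rw [kibble, hsqrt, besselI_two_mul_sqrt _ (by positivity), ← tsum_mul_left]
  refine tsum_congr fun k => ?_
  rw [show (k : ℝ) + (φ - 1) + 1 = k + φ by ring, kibbleCoeff]
  refine log_injOn_pos (mem_Ioi.2 (by positivity)) (mem_Ioi.2 (by positivity)) ?_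
  simp (disch := first | positivity | exact h1r.ne') only
    [log_mul, log_div, log_rpow, log_exp, log_pow]
  field_simp
  ring

theorem kibbleCoeff_mul_gamma_div {φ r z : ℝ} (hφ : 1 < φ) (hr : r ∈ Ioo 0 1) (hz : 0 < z)
    (k : ℕ) :
    kibbleCoeff φ r z k * ((1 / (φ / (1 - r))) ^ ((k : ℝ) + φ - 1) * Gamma ((k : ℝ) + φ - 1))
      = gammaPdf φ φ z * (φ / (1 - r) * exp (-(φ * z * r) / (1 - r)) *
          ((φ * z * r / (1 - r)) ^ k / ((k.factorial : ℝ) * (φ + k - 1)))) := by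
  obtain ⟨hr₀, hr₁⟩ := hr
  have h1r : 0 < 1 - r := sub_pos.2 hr₁
  have hs : 0 < (k : ℝ) + φ - 1 := by linarith [k.cast_nonneg (α := ℝ)]
  have hs' : 0 < φ + k - 1 := by linarith
  have hφ₀ : 0 < φ := by linarith
  have hΓ : Gamma ((k : ℝ) + φ) = (φ + k - 1) * Gamma (k + φ - 1) := by
    rw [add_comm φ, ← Gamma_add_one hs.ne', sub_add_cancel]
  rw [kibbleCoeff, gammaPdf, hΓ]
  refine log_injOn_pos (mem_Ioi.2 (by positivity)) (mem_Ioi.2 (by positivity)) ?_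
  simp (disch := first | positivity | exact h1r.ne') only
    [log_mul, log_div, log_rpow, log_exp, log_pow, log_one]
  field_simp
  ring

theorem integral_inv_mul_kibble {φ r z : ℝ} (hφ : 1 < φ) (hr : r ∈ Ioo 0 1) (hz : 0 < z) :
    ∫ z' in Ioi 0, z'⁻¹ * kibble φ r z' z
      = gammaPdf φ φ z * (φ / (1 - r) * exp (-(φ * z * r) / (1 - r)) *
          ∑' k : ℕ, (φ * z * r / (1 - r)) ^ k / ((k.factorial : ℝ) * (φ + k - 1))) := by
  have hφ₀ : 0 < φ := zero_lt_one.trans hφ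
  have hc : 0 < φ / (1 - r) := div_pos hφ₀ (sub_pos.2 hr.2)
  have hs (k : ℕ) : 0 < (k : ℝ) + φ - 1 := by linarith [k.cast_nonneg (α := ℝ)]
  have hsum : Summable fun k : ℕ =>
      (φ * z * r / (1 - r)) ^ k / ((k.factorial : ℝ) * (φ + k - 1)) :=
    summable_pow_div_factorial_mul (sub_pos.2 hφ) fun k => by linarith [k.cast_nonneg (α := ℝ)]
  calc ∫ z' in Ioi 0, z'⁻¹ * kibble φ r z' z
      = ∫ z' in Ioi 0, ∑' k : ℕ, kibbleCoeff φ r z k *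
          (z' ^ ((k + φ - 1 : ℝ) - 1) * exp (-(φ / (1 - r) * z'))) := by
        refine setIntegral_congr_fun measurableSet_Ioi fun z' (hz' : 0 < z') => ?_
        rw [kibble_eq_tsum hφ₀ hr hz' hz, ← tsum_mul_left]
        refine tsum_congr fun k => ?_
        rw [rpow_sub_one hz'.ne' ((k : ℝ) + φ - 1)]
        ring
    _ = ∑' k : ℕ, kibbleCoeff φ r z k *
          ((1 / (φ / (1 - r))) ^ ((k : ℝ) + φ - 1) * Gamma ((k : ℝ) + φ - 1)) := by
        refine integral_tsum_rpow_mul_exp_neg_mul_Ioi hc (kibbleCoeff_nonneg hφ₀ hr hz) hs ?_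
        simp_rw [kibbleCoeff_mul_gamma_div hφ hr hz]
        exact (hsum.mul_left _).mul_left _
    _ = _ := by
        simp_rw [kibbleCoeff_mul_gamma_div hφ hr hz]
        rw [tsum_mul_left, tsum_mul_left]

/-- conditional inverse moment of the GAR(1) process. -/
theorem gar_cond_inv_moment (ν r z : ℝ) (hν : 2 < ν) (hr : r ∈ Set.Ioo (0 : ℝ) 1)
    (hz : 0 < z) :
    (∫ z' in Set.Ioi (0 : ℝ), (z')⁻¹ * kibble (ν / 2) r z' z)
      = ((ν / 2) ^ (ν / 2) * z ^ (ν / 2 - 1) * Real.exp (-(ν / 2) * z) / Real.Gamma (ν / 2)) *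
          (ν / (2 * (1 - r)) * Real.exp (-(ν * z * r) / (2 * (1 - r))) *
            ∑' k : ℕ,
              (ν * z * r / (2 * (1 - r))) ^ k /
                ((Nat.factorial k : ℝ) * (ν / 2 + (k : ℝ) - 1))) := by
  have hx : ν / 2 * z * r / (1 - r) = ν * z * r / (2 * (1 - r)) := by rw [← div_div]; ring
  rw [integral_inv_mul_kibble (by linarith) hr hz, gammaPdf, div_div, neg_div, hx,
    ← neg_div (2 * (1 - r))]
end
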